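/- arXiv:2212.01881 — 8 statements merged into one kernel-verified Lean document; each statement's English description precedes it below -/
import Mathlib

section
/- Let X be a finite-dimensional real normed space, let A and C be nonempty compact subsets of X with A convex, let r > 0, suppose C ⊆ B_r(A), and suppose the distance from C to the topological boundary ∂B_r(A) equals γ > 0. Then for every δ with 0 ≤ δ ≤ min{r, γ} one has C ⊆ B_{r−δ}(A). -/
open Metric Set

/-- The distance between two subsets of a metric space:
`|M N| = inf {dist m n : m ∈ M, n ∈ N}`. -/
noncomputable def setsDist {X : Type*} [PseudoMetricSpace X] (M N : Set X) : ℝ :=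
  sInf ((fun p : X × X => dist p.1 p.2) '' (M ×ˢ N))

/-!
Let `d = dist(c, A) > r - δ` be attained at `a ∈ A`. By convexity of `A`, the distance to `A`
grows linearly along the ray from `a` through `c`, so the point `x` of that ray with
`dist(x, a) = r` lies on the frontier of `B_r(A)`, at distance `r - d < δ ≤ γ` from `c ∈ C`,
contradicting `|C ∂B_r(A)| = γ`.
-/

open AffineMap

lemma setsDist_le_dist {X : Type*} [PseudoMetricSpace X] {M N : Set X} {m n : X}
    (hm : m ∈ M) (hn : n ∈ N) : setsDist M N ≤ dist m n :=
  csInf_le ⟨0, by rintro _ ⟨p, -, rfl⟩; exact dist_nonneg⟩ ⟨(m, n), ⟨hm, hn⟩, rfl⟩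

lemma mem_cthickening_iff_infDist_le {X : Type*} [PseudoMetricSpace X] {s : Set X}
    (hs : s.Nonempty) {δ : ℝ} (hδ : 0 ≤ δ) {x : X} : x ∈ cthickening δ s ↔ infDist x s ≤ δ := by
  rw [mem_cthickening_iff, infDist, ← ENNReal.le_ofReal_iff_toReal_le (infEDist_ne_top hs) hδ]

section Convex

variable {X : Type*} [NormedAddCommGroup X] [NormedSpace ℝ X] {A : Set X}

lemma Convex.mul_infDist_le_infDist_lineMap (hA : Convex ℝ A) {a : X} (ha : a ∈ A) (c : X)
    {s : ℝ} (hs : 1 ≤ s) : s * infDist c A ≤ infDist (lineMap a c s) A := by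
  have hs₀ : 0 < s := one_pos.trans_le hs
  refine (le_infDist ⟨a, ha⟩).2 fun b hb => ?_
  -- Scaling by `s⁻¹` about `a` maps `lineMap a c s` to `c` and `b` into `A`.
  have hb' : lineMap a b s⁻¹ ∈ A := hA.lineMap_mem ha hb ⟨by positivity, inv_le_one_of_one_le₀ hs⟩
  have hdist : dist c (lineMap a b s⁻¹) = s⁻¹ * dist (lineMap a c s) b := by
    have hvec : c - lineMap a b s⁻¹ = s⁻¹ • (lineMap a c s - b) := by
      simp only [lineMap_apply_module']
      match_scalars <;> field_simp; ring
    rw [dist_eq_norm, dist_eq_norm, hvec, norm_smul, Real.norm_of_nonneg (by positivity)]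
  calc s * infDist c A ≤ s * (s⁻¹ * dist (lineMap a c s) b) := by
        gcongr; exact hdist ▸ infDist_le_dist_of_mem hb'
    _ = dist (lineMap a c s) b := by field_simp

lemma Convex.mem_frontier_cthickening_of_infDist_eq_dist (hA : Convex ℝ A) {a x : X}
    (ha : a ∈ A) (hxa : infDist x A = dist x a) (hpos : 0 < dist x a) :
    x ∈ frontier (Metric.cthickening (dist x a) A) := by
  rw [frontier_eq_closure_inter_closure]
  refine ⟨subset_closure ((mem_cthickening_iff_infDist_le ⟨a, ha⟩ dist_nonneg).2 hxa.le), ?_⟩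
  have hlim : Filter.Tendsto (lineMap a x) (nhdsWithin (1 : ℝ) (Ioi 1)) (nhds x) := by
    simpa only [lineMap_apply_one] using
      ((lineMap_continuous (R := ℝ)).tendsto 1).mono_left nhdsWithin_le_nhds
  refine mem_closure_of_tendsto hlim (eventually_nhdsWithin_of_forall fun s (hs : 1 < s) => ?_)
  rw [mem_compl_iff, mem_cthickening_iff_infDist_le ⟨a, ha⟩ dist_nonneg, not_le]
  calc dist x a < s * infDist x A := by rw [hxa]; exact lt_mul_left hpos hs
    _ ≤ infDist (lineMap a x s) A := hA.mul_infDist_le_infDist_lineMap ha x hs.le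

end Convex

theorem stmt0_general {X : Type*} [NormedAddCommGroup X] [NormedSpace ℝ X]
    (A C : Set X) (hAne : A.Nonempty) (hAcpt : IsCompact A) (hAconv : Convex ℝ A)
    (r : ℝ)
    (hCB : C ⊆ cthickening r A)
    (γ : ℝ) (hγ : setsDist C (frontier (cthickening r A)) = γ) :
    ∀ δ : ℝ, 0 ≤ δ → δ ≤ min r γ → C ⊆ cthickening (r - δ) A := by
  intro δ hδ hδmin c hc
  obtain ⟨hδr, hδγ⟩ := le_min_iff.1 hδmin
  rw [mem_cthickening_iff_infDist_le hAne (by linarith)]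
  by_contra! hfar
  obtain ⟨a, ha, hca⟩ := hAcpt.exists_infDist_eq_dist hAne c
  have hdr : dist c a ≤ r := hca ▸ (mem_cthickening_iff_infDist_le hAne (by linarith)).1 (hCB hc)
  have hd : 0 < dist c a := by linarith
  set x := lineMap a c (r / dist c a)
  have hscale : 1 ≤ r / dist c a := (one_le_div hd).2 hdr
  have hxa : dist x a = r := by
    rw [dist_lineMap_left, Real.norm_of_nonneg (by linarith), dist_comm a c, div_mul_cancel₀ _ hd.ne']
  have hxA : infDist x A = dist x a := le_antisymm (infDist_le_dist_of_mem ha) <| by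
    simpa [hxa, hca, div_mul_cancel₀ _ hd.ne'] using
      hAconv.mul_infDist_le_infDist_lineMap ha c hscale
  have hx : x ∈ frontier (cthickening r A) :=
    hxa ▸ hAconv.mem_frontier_cthickening_of_infDist_eq_dist ha hxA (by linarith)
  have hcx : dist c x = r - dist c a := by
    rw [dist_right_lineMap, Real.norm_of_nonpos (by linarith), dist_comm a c]
    field_simp
    ring
  linarith [hγ ▸ setsDist_le_dist hc hx]

theorem stmt0 {X : Type*} [NormedAddCommGroup X] [NormedSpace ℝ X] [FiniteDimensional ℝ X]
    (A C : Set X) (hAne : A.Nonempty) (hAcpt : IsCompact A) (hAconv : Convex ℝ A)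
    (hCne : C.Nonempty) (hCcpt : IsCompact C)
    (r : ℝ) (hr : 0 < r)
    (hCB : C ⊆ cthickening r A)
    (γ : ℝ) (hγ : setsDist C (frontier (cthickening r A)) = γ) (hγpos : 0 < γ) :
    ∀ δ : ℝ, 0 ≤ δ → δ ≤ min r γ → C ⊆ cthickening (r - δ) A :=
  stmt0_general A C hAne hAcpt hAconv r hCB γ hγ
end

section
/- Let X be a finite-dimensional real normed space and let A, B be nonempty compact subsets of X with Hausdorff distance d_H(A, B) = r. Then d_H(conv(A), conv(B)) = r if and only if there exists a ∈ A with U_r(a) ∩ conv(B) = ∅ or there exists b ∈ B with U_r(b) ∩ conv(A) = ∅. -/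
open Metric Set

/-- The distance to a nonempty convex set is a convex function. -/
lemma convexOn_infDist_aux {X : Type*} [NormedAddCommGroup X] [NormedSpace ℝ X]
    (t : Set X) (ht : Convex ℝ t) (hne : t.Nonempty) :
    ConvexOn ℝ univ fun x => infDist x t := by
  refine ⟨convex_univ, fun x _ y _ a b ha hb hab => ?_⟩
  refine le_of_forall_pos_le_add fun ε hε => ?_
  obtain ⟨u, hu, hxu⟩ := (infDist_lt_iff hne).1
    (lt_add_of_pos_right (infDist x t) hε)
  obtain ⟨v, hv, hyv⟩ := (infDist_lt_iff hne).1
    (lt_add_of_pos_right (infDist y t) hε)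
  have hmem : a • u + b • v ∈ t := ht hu hv ha hb hab
  calc infDist (a • x + b • y) t ≤ dist (a • x + b • y) (a • u + b • v) :=
        infDist_le_dist_of_mem hmem
    _ ≤ dist (a • x) (a • u) + dist (b • y) (b • v) := dist_add_add_le _ _ _ _
    _ = a * dist x u + b * dist y v := by
        rw [dist_smul₀, dist_smul₀, Real.norm_of_nonneg ha, Real.norm_of_nonneg hb]
    _ ≤ a * (infDist x t + ε) + b * (infDist y t + ε) := by
        have h1 := mul_le_mul_of_nonneg_left hxu.le ha
        have h2 := mul_le_mul_of_nonneg_left hyv.le hb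
        linarith
    _ = a • infDist x t + b • infDist y t + ε := by
        simp only [smul_eq_mul]; linear_combination ε * hab

theorem stmt3 {X : Type*} [NormedAddCommGroup X] [NormedSpace ℝ X] [FiniteDimensional ℝ X]
    (A B : Set X) (hAne : A.Nonempty) (hAcpt : IsCompact A)
    (hBne : B.Nonempty) (hBcpt : IsCompact B)
    (r : ℝ) (hr : hausdorffDist A B = r) :
    hausdorffDist (convexHull ℝ A) (convexHull ℝ B) = r ↔
      (∃ a ∈ A, ball a r ∩ convexHull ℝ B = ∅) ∨
      (∃ b ∈ B, ball b r ∩ convexHull ℝ A = ∅) := by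
  have hr0 : 0 ≤ r := hr ▸ hausdorffDist_nonneg
  set A' := convexHull ℝ A with hA'
  set B' := convexHull ℝ B with hB'
  have hAne' : A'.Nonempty := hAne.convexHull
  have hBne' : B'.Nonempty := hBne.convexHull
  have hfin : EMetric.hausdorffEdist A B ≠ ⊤ :=
    hausdorffEdist_ne_top_of_nonempty_of_bounded hAne hBne hAcpt.isBounded hBcpt.isBounded
  have hfin' : EMetric.hausdorffEdist A' B' ≠ ⊤ :=
    hausdorffEdist_ne_top_of_nonempty_of_bounded hAne' hBne'
      (isBounded_convexHull.2 hAcpt.isBounded) (isBounded_convexHull.2 hBcpt.isBounded)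
  have hconvB : ConvexOn ℝ univ fun x => infDist x B' :=
    convexOn_infDist_aux B' (convex_convexHull ℝ B) hBne'
  have hconvA : ConvexOn ℝ univ fun x => infDist x A' :=
    convexOn_infDist_aux A' (convex_convexHull ℝ A) hAne'
  -- distance from hull points bounded by max over the original set
  have key : ∀ (S T : Set X), ∀ m : ℝ, (∀ a ∈ S, infDist a (convexHull ℝ T) ≤ m) →
      ConvexOn ℝ univ (fun x => infDist x (convexHull ℝ T)) →
      ∀ x ∈ convexHull ℝ S, infDist x (convexHull ℝ T) ≤ m := by
    intro S T m hS hconv x hx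
    have hsub : convexHull ℝ S ⊆ {x | x ∈ univ ∧ infDist x (convexHull ℝ T) ≤ m} :=
      convexHull_min (fun a ha => ⟨mem_univ a, hS a ha⟩) (hconv.convex_le m)
    exact (hsub hx).2
  -- the hull Hausdorff distance is at most r
  have hle : hausdorffDist A' B' ≤ r := by
    refine hausdorffDist_le_of_infDist hr0 ?_ ?_
    · refine key A B r (fun a ha => ?_) hconvB
      calc infDist a B' ≤ infDist a B :=
            infDist_le_infDist_of_subset (subset_convexHull ℝ B) hBne
        _ ≤ hausdorffDist A B := infDist_le_hausdorffDist_of_mem ha hfin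
        _ = r := hr
    · refine key B A r (fun b hb => ?_) hconvA
      calc infDist b A' ≤ infDist b A :=
            infDist_le_infDist_of_subset (subset_convexHull ℝ A) hAne
        _ ≤ hausdorffDist B A := infDist_le_hausdorffDist_of_mem hb
            (by rwa [EMetric.hausdorffEdist_comm])
        _ = r := by rw [hausdorffDist_comm, hr]
  constructor
  · intro h
    by_contra hc
    push_neg at hc
    obtain ⟨h1, h2⟩ := hc
    have h1' : ∀ a ∈ A, infDist a B' < r := by
      intro a ha
      obtain ⟨y, hyb, hyB⟩ := h1 a ha
      exact lt_of_le_of_lt (infDist_le_dist_of_mem hyB) (by rwa [dist_comm, ← mem_ball])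
    have h2' : ∀ b ∈ B, infDist b A' < r := by
      intro b hb
      obtain ⟨y, hyb, hyA⟩ := h2 b hb
      exact lt_of_le_of_lt (infDist_le_dist_of_mem hyA) (by rwa [dist_comm, ← mem_ball])
    obtain ⟨a₀, ha₀, hmaxA⟩ := hAcpt.exists_isMaxOn hAne
      ((continuous_infDist_pt B').continuousOn)
    obtain ⟨b₀, hb₀, hmaxB⟩ := hBcpt.exists_isMaxOn hBne
      ((continuous_infDist_pt A').continuousOn)
    set m := max (infDist a₀ B') (infDist b₀ A') with hm
    have hmr : m < r := max_lt (h1' a₀ ha₀) (h2' b₀ hb₀)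
    have : hausdorffDist A' B' ≤ m := by
      refine hausdorffDist_le_of_infDist (le_trans infDist_nonneg (le_max_left _ _)) ?_ ?_
      · exact key A B m (fun a ha => le_trans (hmaxA ha) (le_max_left _ _)) hconvB
      · exact key B A m (fun b hb => le_trans (hmaxB hb) (le_max_right _ _)) hconvA
    rw [h] at this
    exact absurd (lt_of_le_of_lt this hmr) (lt_irrefl r)
  · rintro (⟨a, ha, hdisj⟩ | ⟨b, hb, hdisj⟩)
    · refine le_antisymm hle ?_
      have hge : r ≤ infDist a B' := by
        by_contra hlt
        push_neg at hlt
        obtain ⟨y, hy, hdy⟩ := (infDist_lt_iff hBne').1 hlt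
        have : y ∈ ball a r ∩ B' := ⟨by rwa [mem_ball, dist_comm], hy⟩
        simp [hdisj] at this
      exact le_trans hge (infDist_le_hausdorffDist_of_mem (subset_convexHull ℝ A ha) hfin')
    · refine le_antisymm hle ?_
      have hge : r ≤ infDist b A' := by
        by_contra hlt
        push_neg at hlt
        obtain ⟨y, hy, hdy⟩ := (infDist_lt_iff hAne').1 hlt
        have : y ∈ ball b r ∩ A' := ⟨by rwa [mem_ball, dist_comm], hy⟩
        simp [hdisj] at this
      refine le_trans hge ?_
      rw [hausdorffDist_comm]
      exact infDist_le_hausdorffDist_of_mem (subset_convexHull ℝ B hb)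
        (by rwa [EMetric.hausdorffEdist_comm])
end

section
/- Let A = {A_1, …, A_n} be a boundary in a finite-dimensional real normed space X, let d = (d_1, …, d_n) be a solution vector for A, and set K_d^Conv = ⋂_{i=1}^n B_{d_i}(conv(A_i)). Then d_H(conv(A_i), K_d^Conv) ≤ d_i for every i. -/
/-!
Let `K` be a Steiner compact with `d i = d_H(A_i, K)`. Then `K ⊆ B_{d_i}(A_i) ⊆ B_{d_i}(conv A_i)`
for every `i`, so `K ⊆ K_d^Conv`. The set `K_d^Conv` is convex, hence so is its closed
`d_i`-neighbourhood; this neighbourhood contains `B_{d_i}(K) ⊇ A_i`, and therefore `conv A_i`.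
Conversely `K_d^Conv ⊆ B_{d_i}(conv A_i)`.
-/

open Metric Set

/-- `steinerSum A K = ∑ i, d_H(A_i, K)` — the functional from the Fermat–Steiner problem. -/
noncomputable def steinerSum {X : Type*} [PseudoMetricSpace X] {n : ℕ}
    (A : Fin n → Set X) (K : Set X) : ℝ :=
  ∑ i, Metric.hausdorffDist (A i) K

/-- A Steiner compact for the boundary `A`: a nonempty compact set minimizing
`steinerSum A` over nonempty compact sets. -/
def IsSteinerCompact {X : Type*} [PseudoMetricSpace X] {n : ℕ}
    (A : Fin n → Set X) (K : Set X) : Prop :=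
  K.Nonempty ∧ IsCompact K ∧
    ∀ K' : Set X, K'.Nonempty → IsCompact K' → steinerSum A K ≤ steinerSum A K'

/-- `d` is a solution vector for the boundary `A`: `d i = d_H(A_i, K)` for
some Steiner compact `K`. -/
def IsSolutionVector {X : Type*} [PseudoMetricSpace X] {n : ℕ}
    (A : Fin n → Set X) (d : Fin n → ℝ) : Prop :=
  ∃ K : Set X, IsSteinerCompact A K ∧ ∀ i, d i = Metric.hausdorffDist (A i) K

namespace Metric

variable {α : Type*}

theorem hausdorffDist_le_of_subset_cthickening [PseudoMetricSpace α] {s t : Set α} {r : ℝ}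
    (hr : 0 ≤ r) (hst : s ⊆ cthickening r t) (hts : t ⊆ cthickening r s) :
    hausdorffDist s t ≤ r :=
  ENNReal.toReal_le_of_le_ofReal hr <| hausdorffEDist_le_of_infEDist
    (fun _ hx => mem_cthickening_iff.1 (hst hx)) (fun _ hx => mem_cthickening_iff.1 (hts hx))

theorem subset_cthickening_hausdorffDist [PseudoMetricSpace α] {s t : Set α}
    (h : hausdorffEDist s t ≠ ⊤) : s ⊆ cthickening (hausdorffDist s t) t := fun _ hx =>
  mem_cthickening_iff.2 <| (infEDist_le_hausdorffEDist_of_mem hx).trans_eq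
    (ENNReal.ofReal_toReal h).symm

end Metric

section ConvexHull

variable {E ι : Type*} [SeminormedAddCommGroup E] [NormedSpace ℝ E]

theorem hausdorffDist_convexHull_iInter_cthickening_le {A : ι → Set E} {K : Set E}
    (hAK : ∀ i, hausdorffEDist (A i) K ≠ ⊤) (i : ι) :
    hausdorffDist (convexHull ℝ (A i))
        (⋂ j, cthickening (hausdorffDist (A j) K) (convexHull ℝ (A j))) ≤
      hausdorffDist (A i) K := by
  set C := ⋂ j, cthickening (hausdorffDist (A j) K) (convexHull ℝ (A j))
  have hKC : K ⊆ C := subset_iInter fun j => by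
    rw [hausdorffDist_comm]
    exact (subset_cthickening_hausdorffDist (hausdorffEDist_comm.trans_ne (hAK j))).trans
      (cthickening_subset_of_subset _ (subset_convexHull ℝ _))
  have hC : Convex ℝ C := convex_iInter fun j => (convex_convexHull ℝ _).cthickening _
  refine hausdorffDist_le_of_subset_cthickening hausdorffDist_nonneg ?_ (iInter_subset _ i)
  exact convexHull_min ((subset_cthickening_hausdorffDist (hAK i)).trans
    (cthickening_subset_of_subset _ hKC)) (hC.cthickening _)

end ConvexHull

theorem stmt6_general {X : Type*} [NormedAddCommGroup X] [NormedSpace ℝ X]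
    (n : ℕ) (A : Fin n → Set X) (hA : ∀ i, (A i).Nonempty ∧ IsCompact (A i))
    (d : Fin n → ℝ) (hd : IsSolutionVector A d)
    (KdConv : Set X) (hKdConv : KdConv = ⋂ i, cthickening (d i) (convexHull ℝ (A i))) :
    ∀ i, Metric.hausdorffDist (convexHull ℝ (A i)) KdConv ≤ d i := by
  obtain ⟨K, ⟨hKne, hKc, -⟩, hdK⟩ := hd
  obtain rfl : d = fun i => hausdorffDist (A i) K := funext hdK
  subst hKdConv
  exact hausdorffDist_convexHull_iInter_cthickening_le fun i =>
    hausdorffEDist_ne_top_of_nonempty_of_bounded (hA i).1 hKne (hA i).2.isBounded hKc.isBounded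

theorem stmt6 {X : Type*} [NormedAddCommGroup X] [NormedSpace ℝ X] [FiniteDimensional ℝ X]
    (n : ℕ) (A : Fin n → Set X) (hA : ∀ i, (A i).Nonempty ∧ IsCompact (A i))
    (d : Fin n → ℝ) (hd : IsSolutionVector A d)
    (KdConv : Set X) (hKdConv : KdConv = ⋂ i, cthickening (d i) (convexHull ℝ (A i))) :
    ∀ i, Metric.hausdorffDist (convexHull ℝ (A i)) KdConv ≤ d i :=
  stmt6_general n A hA d hd KdConv hKdConv
end

section
/- Let A = {A_1, …, A_n} be a boundary in a finite-dimensional real normed space X, let d be a solution vector for A and K_d = ⋂_{i=1}^n B_{d_i}(A_i). If a ∈ A_i is a far point and d_i > 0, then B_{d_i}(a) ∩ K_d is contained in the topological boundary ∂K_d. -/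
open Metric Set

theorem stmt7 {X : Type*} [NormedAddCommGroup X] [NormedSpace ℝ X] [FiniteDimensional ℝ X]
    (n : ℕ) (A : Fin n → Set X) (hA : ∀ i, (A i).Nonempty ∧ IsCompact (A i))
    (d : Fin n → ℝ) (hd : IsSolutionVector A d)
    (Kd : Set X) (hKd : Kd = ⋂ i, cthickening (d i) (A i))
    (i : Fin n) (a : X) (ha : a ∈ A i)
    (hfar : ball a (d i) ∩ Kd = ∅) (hdi : 0 < d i) :
    closedBall a (d i) ∩ Kd ⊆ frontier Kd := by
  rintro x ⟨hx1, hx2⟩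
  have hKclosed : IsClosed Kd := by
    rw [hKd]; exact isClosed_iInter fun j => isClosed_cthickening
  have hxa : dist x a = d i := by
    have h1 : dist x a ≤ d i := mem_closedBall.mp hx1
    rcases lt_or_eq_of_le h1 with h | h
    · exfalso
      have : x ∈ ball a (d i) ∩ Kd := ⟨mem_ball.mpr h, hx2⟩
      rw [hfar] at this; exact this
    · exact h
  rw [frontier, hKclosed.closure_eq]
  refine ⟨hx2, fun hint => ?_⟩
  obtain ⟨ε, hε, hball⟩ := Metric.isOpen_iff.mp isOpen_interior x hint
  set t : ℝ := min (ε / (2 * d i)) 1 with ht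
  have ht0 : 0 < t := lt_min (div_pos hε (by linarith)) one_pos
  have ht1 : t ≤ 1 := min_le_right _ _
  set y : X := x + t • (a - x) with hy
  have hyx : dist y x = t * d i := by
    rw [dist_eq_norm]
    have : y - x = t • (a - x) := by simp [hy]
    rw [this, norm_smul, Real.norm_eq_abs, abs_of_pos ht0]
    rw [show ‖a - x‖ = dist a x from (dist_eq_norm a x).symm, dist_comm, hxa]
  have hya : dist y a = (1 - t) * d i := by
    rw [dist_eq_norm]
    have : y - a = (1 - t) • (x - a) := by
      rw [hy]; module
    rw [this, norm_smul, Real.norm_eq_abs, abs_of_nonneg (by linarith)]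
    rw [show ‖x - a‖ = dist x a from (dist_eq_norm x a).symm, hxa]
  have hymem : y ∈ Kd := by
    apply interior_subset
    apply hball
    rw [mem_ball, hyx]
    calc t * d i ≤ (ε / (2 * d i)) * d i := by
          apply mul_le_mul_of_nonneg_right (min_le_left _ _) hdi.le
      _ = ε / 2 := by field_simp
      _ < ε := by linarith
  have hyball : y ∈ ball a (d i) := by
    rw [mem_ball, hya]
    nlinarith
  have : y ∈ ball a (d i) ∩ Kd := ⟨hyball, hymem⟩
  rw [hfar] at this
  exact this
end

section
/- Let A = {A_1, …, A_n} be a convex boundary (each A_i is a nonempty convex compact) in a finite-dimensional real normed space X, let d be a solution vector for A and K_d = ⋂_{i=1}^n B_{d_i}(A_i). If a ∈ A_i is a far point and d_i > 0, then a lies on the topological boundary ∂A_i of A_i. -/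
open Metric Set

open AffineMap Filter Topology

/-! If the far point `a` were interior to `A i`, push it slightly away from a point `k` of the
Steiner compact `K`, to `x = k + s • (a - k)` with `s > 1`, staying in `A i`. As `K_d` is convex
and contains `k`, the homothety about `k` with ratio `s` carries the ball `B(a, d i)`, which misses
`K_d`, to a ball of radius `s * d i > d i` about `x` that still misses `K_d ⊇ K`. Hence
`infDist x K > d i = d_H(A i, K)`, although `x ∈ A i`. -/

theorem subset_cthickening_hausdorffDist {α : Type*} [PseudoMetricSpace α] {s t : Set α}
    (h : hausdorffEDist s t ≠ ⊤) : t ⊆ cthickening (hausdorffDist s t) s := by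
  intro x hx
  rw [mem_cthickening_iff, hausdorffDist, ENNReal.ofReal_toReal h, hausdorffEDist_comm]
  exact infEDist_le_hausdorffEDist_of_mem hx

theorem dist_homothety_homothety {𝕜 E : Type*} [NormedField 𝕜] [SeminormedAddCommGroup E]
    [NormedSpace 𝕜 E] (k : E) (c : 𝕜) (x y : E) :
    dist (homothety k c x) (homothety k c y) = ‖c‖ * dist x y := by
  simp only [homothety_apply, vsub_eq_sub, vadd_eq_add, dist_add_right, dist_smul₀,
    dist_sub_right]

/-- A point of `C` in the image ball would be pulled back into `ball a r` along its segment
to `k`. -/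
theorem Convex.disjoint_ball_homothety {E : Type*} [SeminormedAddCommGroup E] [NormedSpace ℝ E]
    {C : Set E} {k a : E} {r s : ℝ} (hC : Convex ℝ C) (hk : k ∈ C) (hs : 1 ≤ s)
    (h : Disjoint (ball a r) C) : Disjoint (ball (homothety k s a) (s * r)) C := by
  have hs₀ : 0 < s := one_pos.trans_le hs
  refine Set.disjoint_left.2 fun y hy hyC => Set.disjoint_left.1 h ?_
    (hC.lineMap_mem hk hyC ⟨inv_nonneg.2 hs₀.le, inv_le_one_of_one_le₀ hs⟩)
  rw [mem_ball] at hy ⊢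
  calc dist (lineMap k y s⁻¹) a
      = dist (homothety k s⁻¹ y) (homothety k s⁻¹ (homothety k s a)) := by
        rw [← homothety_mul_apply, inv_mul_cancel₀ hs₀.ne', homothety_one, id_apply,
          homothety_eq_lineMap]
    _ = s⁻¹ * dist y (homothety k s a) := by
        rw [dist_homothety_homothety, Real.norm_of_nonneg (inv_nonneg.2 hs₀.le)]
    _ < r := by rwa [inv_mul_lt_iff₀ hs₀]

theorem exists_one_lt_homothety_mem_of_mem_interior {E : Type*} [AddCommGroup E] [Module ℝ E]
    [TopologicalSpace E] [IsTopologicalAddGroup E] [ContinuousSMul ℝ E] {s : Set E} {a : E}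
    (ha : a ∈ interior s) (k : E) : ∃ c : ℝ, 1 < c ∧ homothety k c a ∈ s := by
  have hlim : Tendsto (fun c : ℝ => lineMap k a c) (𝓝[>] 1) (𝓝 a) := by
    have h₁ : Tendsto (lineMap k a) (𝓝 (1 : ℝ)) (𝓝 (lineMap k a (1 : ℝ))) :=
      lineMap_continuous.tendsto 1
    rw [lineMap_apply_one] at h₁
    exact h₁.mono_left nhdsWithin_le_nhds
  obtain ⟨c, hcs, hc⟩ :=
    ((hlim.eventually (mem_interior_iff_mem_nhds.1 ha)).and self_mem_nhdsWithin).exists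
  exact ⟨c, hc, homothety_eq_lineMap k c a ▸ hcs⟩

theorem stmt8_general {X : Type*} [NormedAddCommGroup X] [NormedSpace ℝ X]
    (n : ℕ) (A : Fin n → Set X)
    (hA : ∀ i, (A i).Nonempty ∧ IsCompact (A i) ∧ Convex ℝ (A i))
    (d : Fin n → ℝ) (hd : IsSolutionVector A d)
    (Kd : Set X) (hKd : Kd = ⋂ i, cthickening (d i) (A i))
    (i : Fin n) (a : X) (ha : a ∈ A i)
    (hfar : ball a (d i) ∩ Kd = ∅) (hdi : 0 < d i) :
    a ∈ frontier (A i) := by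
  obtain ⟨K, ⟨⟨k, hk⟩, hKcomp, -⟩, hdK⟩ := hd
  have hfin : ∀ j, hausdorffEDist (A j) K ≠ ⊤ := fun j =>
    hausdorffEDist_ne_top_of_nonempty_of_bounded (hA j).1 ⟨k, hk⟩ (hA j).2.1.isBounded
      hKcomp.isBounded
  have hKKd : K ⊆ Kd := hKd ▸ subset_iInter fun j =>
    hdK j ▸ subset_cthickening_hausdorffDist (hfin j)
  have hKd_convex : Convex ℝ Kd := hKd ▸ convex_iInter fun j => (hA j).2.2.cthickening _
  refine ⟨subset_closure ha, fun hint => ?_⟩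
  obtain ⟨s, hs, hxA⟩ := exists_one_lt_homothety_mem_of_mem_interior hint k
  have hx : infDist (homothety k s a) K < s * d i := by
    calc infDist (homothety k s a) K ≤ d i := hdK i ▸ infDist_le_hausdorffDist_of_mem hxA (hfin i)
      _ < s * d i := lt_mul_left hdi hs
  obtain ⟨y, hyK, hy⟩ := (infDist_lt_iff ⟨k, hk⟩).1 hx
  exact Set.disjoint_left.1 (hKd_convex.disjoint_ball_homothety (hKKd hk) hs.le
    (Set.disjoint_iff_inter_eq_empty.2 hfar)) (mem_ball'.2 hy) (hKKd hyK)

theorem stmt8 {X : Type*} [NormedAddCommGroup X] [NormedSpace ℝ X] [FiniteDimensional ℝ X]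
    (n : ℕ) (A : Fin n → Set X)
    (hA : ∀ i, (A i).Nonempty ∧ IsCompact (A i) ∧ Convex ℝ (A i))
    (d : Fin n → ℝ) (hd : IsSolutionVector A d)
    (Kd : Set X) (hKd : Kd = ⋂ i, cthickening (d i) (A i))
    (i : Fin n) (a : X) (ha : a ∈ A i)
    (hfar : ball a (d i) ∩ Kd = ∅) (hdi : 0 < d i) :
    a ∈ frontier (A i) :=
  stmt8_general n A hA d hd Kd hKd i a ha hfar hdi
end

section
/- Let A = {A_1, …, A_n} be a convex boundary (each A_i is a nonempty convex compact) in a finite-dimensional real normed space X, and let d be any solution vector for A with K_d = ⋂_{i=1}^n B_{d_i}(A_i). Then there exists an index i and a point a ∈ A_i that is far, i.e., U_{d_i}(a) ∩ K_d = ∅. -/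
open Metric Set

theorem stmt11 {X : Type*} [NormedAddCommGroup X] [NormedSpace ℝ X] [FiniteDimensional ℝ X]
    (n : ℕ) (hn : 0 < n) (A : Fin n → Set X)
    (hA : ∀ i, (A i).Nonempty ∧ IsCompact (A i) ∧ Convex ℝ (A i))
    (d : Fin n → ℝ) (hd : IsSolutionVector A d)
    (Kd : Set X) (hKd : Kd = ⋂ i, cthickening (d i) (A i)) :
    ∃ i : Fin n, ∃ a ∈ A i, ball a (d i) ∩ Kd = ∅ := by
  by_contra hcon
  push_neg at hcon
  -- from the negation: every ball meets `Kd`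
  have hcon' : ∀ i, ∀ a ∈ A i, ∃ x ∈ Kd, dist a x < d i := by
    intro i a ha
    obtain ⟨x, hx1, hx2⟩ := hcon i a ha
    exact ⟨x, hx2, mem_ball'.1 hx1⟩
  obtain ⟨K, ⟨hKne, hKcomp, hKmin⟩, hdK⟩ := hd
  -- all radii are positive
  have hdpos : ∀ i, 0 < d i := by
    intro i
    obtain ⟨a, ha⟩ := (hA i).1
    obtain ⟨x, -, hx⟩ := hcon' i a ha
    exact lt_of_le_of_lt dist_nonneg hx
  -- membership in Kd bounds distances to the A j
  have hKdmem : ∀ x ∈ Kd, ∀ j, infDist x (A j) ≤ d j := by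
    intro x hx j
    rw [hKd, mem_iInter] at hx
    have h1 : EMetric.infEdist x (A j) ≤ ENNReal.ofReal (d j) := mem_cthickening_iff.1 (hx j)
    have h2 : (EMetric.infEdist x (A j)).toReal ≤ (ENNReal.ofReal (d j)).toReal :=
      ENNReal.toReal_mono ENNReal.ofReal_ne_top h1
    rwa [ENNReal.toReal_ofReal (hdpos j).le] at h2
  set i₀ : Fin n := ⟨0, hn⟩ with hi₀
  -- a point x₀ of Kd which is strictly within d i₀ of A i₀
  obtain ⟨a₀, ha₀⟩ := (hA i₀).1
  obtain ⟨x₀, hx₀Kd, hx₀d⟩ := hcon' i₀ a₀ ha₀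
  have hKdne : Kd.Nonempty := ⟨x₀, hx₀Kd⟩
  have hσpos : infDist x₀ (A i₀) < d i₀ := by
    have h1 : infDist x₀ (A i₀) ≤ dist x₀ a₀ := infDist_le_dist_of_mem ha₀
    rw [dist_comm] at h1
    exact lt_of_le_of_lt h1 hx₀d
  set σ : ℝ := d i₀ - infDist x₀ (A i₀) with hσ
  have hσ0 : 0 < σ := by simp [hσ]; linarith
  have hσled : σ ≤ d i₀ := by
    have := infDist_nonneg (s := A i₀) (x := x₀); simp [hσ]; linarith
  -- Kd is compact
  have hKdclosed : IsClosed Kd := by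
    rw [hKd]; exact isClosed_iInter (fun i => isClosed_cthickening)
  have hKdbdd : Bornology.IsBounded Kd := by
    have hsub : Kd ⊆ cthickening (d i₀) (A i₀) := by
      rw [hKd]; exact iInter_subset _ i₀
    exact ((hA i₀).2.1.isBounded.cthickening).subset hsub
  have hKdcomp : IsCompact Kd := isCompact_of_isClosed_isBounded hKdclosed hKdbdd
  -- r j : an upper bound < d j for distances from A j to Kd
  have hr : ∀ j, ∃ r, r < d j ∧ ∀ a ∈ A j, infDist a Kd ≤ r := by
    intro j
    obtain ⟨am, ham, hmax⟩ := (hA j).2.1.exists_isMaxOn (hA j).1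
      ((continuous_infDist_pt Kd).continuousOn)
    refine ⟨infDist am Kd, ?_, fun a ha => hmax ha⟩
    obtain ⟨x, hx, hxd⟩ := hcon' j am ham
    exact lt_of_le_of_lt (infDist_le_dist_of_mem hx) hxd
  choose r hrlt hrle using hr
  -- a radius bound R for Kd around x₀
  obtain ⟨R₀, hR₀⟩ := hKdbdd.subset_closedBall x₀
  set R : ℝ := max R₀ 0 with hR
  have hR0 : 0 ≤ R := le_max_right _ _
  have hRb : ∀ y ∈ Kd, dist y x₀ ≤ R := fun y hy =>
    le_trans (mem_closedBall.1 (hR₀ hy)) (le_max_left _ _)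
  -- the gap δ
  have hne : Nonempty (Fin n) := ⟨i₀⟩
  set δ : ℝ := Finset.univ.inf' Finset.univ_nonempty (fun j => d j - r j) with hδ
  have hδle : ∀ j, δ ≤ d j - r j := fun j => Finset.inf'_le _ (Finset.mem_univ j)
  have hδpos : 0 < δ := by
    rw [hδ, Finset.lt_inf'_iff]
    intro j _
    linarith [hrlt j]
  -- the contraction parameter t
  set t : ℝ := min (δ / (2 * (R + 1))) (1 / 2) with ht
  have ht0 : 0 < t := by
    apply lt_min _ (by norm_num)
    positivity
  have ht1 : t ≤ 1 := le_trans (min_le_right _ _) (by norm_num)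
  have htR : t * R < δ := by
    have h1 : t ≤ δ / (2 * (R + 1)) := min_le_left _ _
    have h2 : t * R ≤ δ / (2 * (R + 1)) * R := by
      apply mul_le_mul_of_nonneg_right h1 hR0
    have h3 : δ / (2 * (R + 1)) * R ≤ δ / 2 := by
      rw [div_mul_eq_mul_div, div_le_div_iff₀ (by positivity) (by norm_num)]
      nlinarith
    linarith
  -- the contracted competitor
  set f : X → X := fun y => (1 - t) • y + t • x₀ with hf
  set K' : Set X := f '' Kd with hK'
  have hK'ne : K'.Nonempty := hKdne.image f
  have hK'comp : IsCompact K' := hKdcomp.image (by fun_prop)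
  -- distance from points of K' to A j, via convexity
  have hβ : ∀ j, ∀ y ∈ Kd, infDist (f y) (A j) ≤ (1 - t) * d j + t * infDist x₀ (A j) := by
    intro j y hy
    obtain ⟨p, hp, hdp⟩ := (hA j).2.1.exists_infDist_eq_dist (hA j).1 y
    obtain ⟨q, hq, hdq⟩ := (hA j).2.1.exists_infDist_eq_dist (hA j).1 x₀
    have hmem : (1 - t) • p + t • q ∈ A j :=
      (hA j).2.2 hp hq (by linarith) ht0.le (by ring)
    have key : dist (f y) ((1 - t) • p + t • q) ≤ (1 - t) * dist y p + t * dist x₀ q := by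
      have hsub : f y - ((1 - t) • p + t • q) = (1 - t) • (y - p) + t • (x₀ - q) := by
        simp only [hf, smul_sub]; abel
      rw [dist_eq_norm, hsub]
      calc ‖(1 - t) • (y - p) + t • (x₀ - q)‖
          ≤ ‖(1 - t) • (y - p)‖ + ‖t • (x₀ - q)‖ := norm_add_le _ _
        _ = (1 - t) * ‖y - p‖ + t * ‖x₀ - q‖ := by
            rw [norm_smul, norm_smul, Real.norm_of_nonneg (by linarith),
              Real.norm_of_nonneg ht0.le]
        _ = (1 - t) * dist y p + t * dist x₀ q := by rw [← dist_eq_norm, ← dist_eq_norm]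
    calc infDist (f y) (A j) ≤ dist (f y) ((1 - t) • p + t • q) := infDist_le_dist_of_mem hmem
      _ ≤ (1 - t) * dist y p + t * dist x₀ q := key
      _ ≤ (1 - t) * d j + t * infDist x₀ (A j) := by
          have h1 : dist y p ≤ d j := by rw [← hdp]; exact hKdmem y hy j
          have h2 : dist x₀ q = infDist x₀ (A j) := hdq.symm
          have ht1' : (0:ℝ) ≤ 1 - t := by linarith
          nlinarith [mul_le_mul_of_nonneg_left h1 ht1']
  have hβ' : ∀ j, ∀ z ∈ K', infDist z (A j) ≤ d j := by
    rintro j z ⟨y, hy, rfl⟩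
    have h1 := hβ j y hy
    have h2 : infDist x₀ (A j) ≤ d j := hKdmem x₀ hx₀Kd j
    nlinarith
  have hβi₀ : ∀ z ∈ K', infDist z (A i₀) ≤ d i₀ - t * σ := by
    rintro z ⟨y, hy, rfl⟩
    have h1 := hβ i₀ y hy
    have : infDist x₀ (A i₀) = d i₀ - σ := by rw [hσ]; ring
    rw [this] at h1
    nlinarith
  -- distance from points of A j to K'
  have hα : ∀ j, ∀ a ∈ A j, infDist a K' ≤ r j + t * R := by
    intro j a ha
    obtain ⟨y, hy, hdy⟩ := hKdcomp.exists_infDist_eq_dist hKdne a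
    have hfy : f y ∈ K' := ⟨y, hy, rfl⟩
    have hdyfy : dist y (f y) ≤ t * R := by
      have : y - f y = t • (y - x₀) := by simp only [hf, smul_sub]; module
      rw [dist_eq_norm, this, norm_smul, Real.norm_of_nonneg ht0.le]
      exact mul_le_mul_of_nonneg_left (by rw [← dist_eq_norm]; exact hRb y hy) ht0.le
    calc infDist a K' ≤ dist a (f y) := infDist_le_dist_of_mem hfy
      _ ≤ dist a y + dist y (f y) := dist_triangle _ _ _
      _ ≤ r j + t * R := by
          have : dist a y ≤ r j := by rw [← hdy]; exact hrle j a ha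
          linarith
  -- Hausdorff distance bounds
  have hH : ∀ j, hausdorffDist (A j) K' ≤ d j := by
    intro j
    apply hausdorffDist_le_of_infDist (hdpos j).le
    · intro a ha
      have := hα j a ha
      have := hδle j
      linarith
    · exact hβ' j
  have hHi₀ : hausdorffDist (A i₀) K' < d i₀ := by
    have hc0 : (0:ℝ) ≤ max (r i₀ + t * R) (d i₀ - t * σ) := by
      have : t * σ ≤ σ := by nlinarith
      have : 0 ≤ d i₀ - t * σ := by linarith
      exact le_max_of_le_right this
    have hle : hausdorffDist (A i₀) K' ≤ max (r i₀ + t * R) (d i₀ - t * σ) := by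
      apply hausdorffDist_le_of_infDist hc0
      · intro a ha
        exact le_max_of_le_left (hα i₀ a ha)
      · intro z hz
        exact le_max_of_le_right (hβi₀ z hz)
    have h1 : r i₀ + t * R < d i₀ := by have := hδle i₀; linarith
    have h2 : d i₀ - t * σ < d i₀ := by nlinarith
    exact lt_of_le_of_lt hle (max_lt h1 h2)
  -- contradiction with minimality
  have hsum : steinerSum A K' < steinerSum A K := by
    unfold steinerSum
    have heq : ∑ i, hausdorffDist (A i) K = ∑ i, d i :=
      Finset.sum_congr rfl (fun i _ => (hdK i).symm)
    rw [heq]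
    exact Finset.sum_lt_sum (fun j _ => hH j) ⟨i₀, Finset.mem_univ _, hHi₀⟩
  exact absurd (hKmin K' hK'ne hK'comp) (not_le.2 hsum)
end

section
/- Let X be a finite-dimensional real normed space whose norm is strictly convex, let A = {A_1, …, A_n} be a finite boundary (each A_i is a nonempty finite subset of X), and let d be any solution vector for A with K_d = ⋂_{i=1}^n B_{d_i}(A_i). Then there exists an index i and a point a ∈ A_i that is discrete, i.e., B_{d_i}(a) ∩ K_d is a finite set. -/
open Metric Set

lemma midpoint_dist_lt_of_strictConvex {X : Type*} [NormedAddCommGroup X] [NormedSpace ℝ X]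
    [StrictConvexSpace ℝ X] {c x y : X} {r : ℝ} (hne : x ≠ y)
    (hx : dist x c ≤ r) (hy : dist y c ≤ r) :
    dist ((1/2 : ℝ) • x + (1/2 : ℝ) • y) c < r := by
  have hr0 : 0 ≤ r := le_trans dist_nonneg hx
  rcases hr0.eq_or_lt with hr | hr
  · exact absurd (by
      have hx0 : x = c := dist_le_zero.mp (hr ▸ hx)
      have hy0 : y = c := dist_le_zero.mp (hr ▸ hy)
      rw [hx0, hy0]) hne
  · have hmem := strictConvex_closedBall ℝ c r (mem_closedBall.mpr hx) (mem_closedBall.mpr hy)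
      hne (by norm_num : (0:ℝ) < 1/2) (by norm_num : (0:ℝ) < 1/2) (by norm_num)
    rw [interior_closedBall c hr.ne'] at hmem
    exact mem_ball.mp hmem

lemma exists_near_of_mem_cthickening {X : Type*} [NormedAddCommGroup X]
    {s : Set X} (hs : s.Finite) (hne : s.Nonempty) {x : X} {δ : ℝ} (hδ : 0 ≤ δ)
    (hx : x ∈ cthickening δ s) : ∃ c ∈ s, dist x c ≤ δ := by
  obtain ⟨c, hc, hcd⟩ := hs.isCompact.exists_infEdist_eq_edist hne x
  refine ⟨c, hc, ?_⟩
  have h := mem_cthickening_iff.mp hx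
  rw [hcd] at h
  exact (edist_le_ofReal hδ).mp h

theorem stmt13 {X : Type*} [NormedAddCommGroup X] [NormedSpace ℝ X]
    [FiniteDimensional ℝ X] [StrictConvexSpace ℝ X]
    (n : ℕ) (hn : 0 < n) (A : Fin n → Set X)
    (hA : ∀ i, (A i).Nonempty ∧ (A i).Finite)
    (d : Fin n → ℝ) (hd : IsSolutionVector A d)
    (Kd : Set X) (hKd : Kd = ⋂ i, cthickening (d i) (A i)) :
    ∃ i : Fin n, ∃ a ∈ A i, (closedBall a (d i) ∩ Kd).Finite := by
  obtain ⟨K, ⟨hKne, hKcomp, hKmin⟩, hdK⟩ := hd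
  have hd0 : ∀ i, 0 ≤ d i := fun i => (hdK i) ▸ Metric.hausdorffDist_nonneg
  have hnFin : Nonempty (Fin n) := ⟨⟨0, hn⟩⟩
  by_cases h : ∃ j, ∃ a ∈ A j, ¬ ∃ x : X, dist x a < d j ∧ ∀ k, ∃ c ∈ A k, dist x c < d k
  · -- "no strict witness" case: the corresponding set is finite via the cell map
    obtain ⟨j, a, haj, hnx⟩ := h
    refine ⟨j, a, haj, ?_⟩
    subst hKd
    set T : Set X := closedBall a (d j) ∩ ⋂ i, cthickening (d i) (A i) with hT
    set φ : X → (Fin n → Set X) := fun x k => {c | c ∈ A k ∧ dist x c ≤ d k} with hφ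
    have hinj : Set.InjOn φ T := by
      rintro x ⟨hxb, hxK⟩ y ⟨hyb, hyK⟩ hxy
      by_contra hne
      apply hnx
      refine ⟨(1/2 : ℝ) • x + (1/2 : ℝ) • y,
        midpoint_dist_lt_of_strictConvex hne (mem_closedBall.mp hxb) (mem_closedBall.mp hyb), ?_⟩
      intro k
      have hxk : x ∈ cthickening (d k) (A k) := Set.mem_iInter.mp hxK k
      obtain ⟨c, hc, hdc⟩ := exists_near_of_mem_cthickening (hA k).2 (hA k).1 (hd0 k) hxk
      have hcx : c ∈ φ x k := ⟨hc, hdc⟩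
      rw [hxy] at hcx
      exact ⟨c, hc, midpoint_dist_lt_of_strictConvex hne hdc hcx.2⟩
    have himg : (φ '' T).Finite := by
      apply Set.Finite.subset (Set.Finite.pi (fun k => (hA k).2.finite_subsets))
      rintro f ⟨x, hx, rfl⟩
      intro k _
      exact fun c hc => hc.1
    exact Set.Finite.of_finite_image himg hinj
  · -- every pair has a strict witness: contradict minimality
    exfalso
    push_neg at h
    have h' : ∀ p : Fin n × X, ∃ x : X,
        p.2 ∈ A p.1 → (dist x p.2 < d p.1 ∧ ∀ k, ∃ c ∈ A k, dist x c < d k) := by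
      intro p
      by_cases hp : p.2 ∈ A p.1
      · obtain ⟨x, hx⟩ := h p.1 p.2 hp
        exact ⟨x, fun _ => hx⟩
      · exact ⟨0, fun hc => absurd hc hp⟩
    choose w hw using h'
    -- the finite set of relevant pairs
    have hPfin : {p : Fin n × X | p.2 ∈ A p.1}.Finite := by
      apply Set.Finite.subset (Set.Finite.prod (Set.finite_univ) (Set.finite_iUnion (fun j => (hA j).2)))
      rintro ⟨j, a⟩ hja
      exact ⟨Set.mem_univ _, Set.mem_iUnion.mpr ⟨j, hja⟩⟩
    set PF := hPfin.toFinset with hPF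
    have hPne : PF.Nonempty := by
      obtain ⟨a0, ha0⟩ := (hA ⟨0, hn⟩).1
      exact ⟨(⟨0, hn⟩, a0), hPfin.mem_toFinset.mpr ha0⟩
    -- slack of each witness
    set slack : Fin n × X → ℝ := fun p =>
      min (d p.1 - dist (w p) p.2)
        (Finset.univ.inf' (Finset.univ_nonempty) (fun k => d k - infDist (w p) (A k))) with hslack
    set ε := PF.inf' hPne slack with hε
    have hεpos : 0 < ε := by
      rw [hε, Finset.lt_inf'_iff]
      intro p hp
      have hpA : p.2 ∈ A p.1 := hPfin.mem_toFinset.mp hp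
      obtain ⟨h1, h2⟩ := hw p hpA
      refine lt_min (by linarith) ?_
      rw [Finset.lt_inf'_iff]
      intro k _
      obtain ⟨c, hc, hdc⟩ := h2 k
      have := infDist_le_dist_of_mem (x := w p) hc
      linarith
    -- the improved competitor
    set K' : Set X := w '' {p : Fin n × X | p.2 ∈ A p.1} with hK'
    have hK'fin : K'.Finite := hPfin.image w
    have hK'ne : K'.Nonempty := by
      obtain ⟨a0, ha0⟩ := (hA ⟨0, hn⟩).1
      exact ⟨w (⟨0, hn⟩, a0), ⟨(⟨0, hn⟩, a0), ha0, rfl⟩⟩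
    have hslack_le : ∀ p ∈ PF, ε ≤ slack p := fun p hp => Finset.inf'_le slack hp
    have key : ∀ j, Metric.hausdorffDist (A j) K' ≤ d j - ε := by
      intro j
      obtain ⟨a0, ha0⟩ := (hA j).1
      have hp0 : ((j, a0) : Fin n × X) ∈ PF := hPfin.mem_toFinset.mpr ha0
      have hr0 : 0 ≤ d j - ε := by
        have h1 := hslack_le _ hp0
        have h2 : slack (j, a0) ≤ d j - dist (w (j, a0)) a0 := min_le_left _ _
        have := dist_nonneg (x := w (j, a0)) (y := a0)
        linarith
      apply Metric.hausdorffDist_le_of_mem_dist hr0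
      · intro x hx
        refine ⟨w (j, x), ⟨(j, x), hx, rfl⟩, ?_⟩
        have hp : ((j, x) : Fin n × X) ∈ PF := hPfin.mem_toFinset.mpr hx
        have h1 := hslack_le _ hp
        have h2 : slack (j, x) ≤ d j - dist (w (j, x)) x := min_le_left _ _
        rw [dist_comm]
        linarith
      · rintro y ⟨p, hp, rfl⟩
        have hpF : p ∈ PF := hPfin.mem_toFinset.mpr hp
        have h1 := hslack_le _ hpF
        have h2 : slack p ≤ Finset.univ.inf' Finset.univ_nonempty
            (fun k => d k - infDist (w p) (A k)) := min_le_right _ _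
        have h3 : Finset.univ.inf' Finset.univ_nonempty
            (fun k => d k - infDist (w p) (A k)) ≤ d j - infDist (w p) (A j) :=
          Finset.inf'_le _ (Finset.mem_univ j)
        have h4 : infDist (w p) (A j) ≤ d j - ε := by linarith
        obtain ⟨c, hc, hcd⟩ := (hA j).2.isCompact.exists_infDist_eq_dist (hA j).1 (w p)
        refine ⟨c, hc, ?_⟩
        rw [hcd] at h4
        simpa [dist_comm] using h4
    have hsum : steinerSum A K' < steinerSum A K := by
      have h1 : steinerSum A K' ≤ ∑ j, (d j - ε) := Finset.sum_le_sum (fun j _ => key j)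
      have h2 : ∑ j, (d j - ε) < ∑ j, d j :=
        Finset.sum_lt_sum_of_nonempty Finset.univ_nonempty (fun j _ => by linarith)
      have h3 : steinerSum A K = ∑ j, d j :=
        Finset.sum_congr rfl (fun i _ => (hdK i).symm)
      rw [h3]
      exact lt_of_le_of_lt h1 h2
    exact absurd (hKmin K' hK'ne hK'fin.isCompact) (not_le.mpr hsum)
end

section
/- Let A = {A_1, …, A_n} be a convex boundary in a finite-dimensional real normed space X, let d be a solution vector for A and K_d = ⋂_{i=1}^n B_{d_i}(A_i), let F_i be the set of far points of A_i, and let HP_d(F_i) = B_{d_i}(F_i) ∩ K_d. Suppose HP_d(F_i) ≠ ∅, i ≠ j, HP_d(F_i) ⊆ U_{d_j}(A_j), and γ := dist(HP_d(F_i), ∂B_{d_j}(A_j)) > 0. Then for every ε with 0 < ε < γ there exists Δ > 0 such that for all δ with 0 ≤ δ ≤ Δ, the set H = B_{d_i+δ}(F_i) ∩ K_d satisfies dist(H, ∂B_{d_j}(A_j)) ≥ γ − ε > 0. -/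
open Metric Set

private lemma mem_cthick_iff {X : Type*} [PseudoMetricSpace X] {s : Set X}
    (hs : s.Nonempty) {δ : ℝ} (hδ : 0 ≤ δ) {x : X} :
    x ∈ Metric.cthickening δ s ↔ Metric.infDist x s ≤ δ := by
  rw [Metric.mem_cthickening_iff, Metric.infDist,
    ENNReal.le_ofReal_iff_toReal_le (Metric.infEdist_ne_top hs) hδ]

theorem stmt16 {X : Type*} [NormedAddCommGroup X] [NormedSpace ℝ X] [FiniteDimensional ℝ X]
    (n : ℕ) (A : Fin n → Set X)
    (hA : ∀ k, (A k).Nonempty ∧ IsCompact (A k) ∧ Convex ℝ (A k))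
    (d : Fin n → ℝ) (hd : IsSolutionVector A d)
    (Kd : Set X) (hKd : Kd = ⋂ k, cthickening (d k) (A k))
    (i j : Fin n) (hij : i ≠ j)
    (Fi : Set X) (hFi : Fi = {a ∈ A i | ball a (d i) ∩ Kd = ∅})
    (HPFi : Set X) (hHPFi : HPFi = cthickening (d i) Fi ∩ Kd)
    (hne : HPFi.Nonempty) (hsub : HPFi ⊆ thickening (d j) (A j))
    (γ : ℝ) (hγ : setsDist HPFi (frontier (cthickening (d j) (A j))) = γ) (hγpos : 0 < γ) :
    ∀ ε : ℝ, 0 < ε → ε < γ → ∃ Δ : ℝ, 0 < Δ ∧ ∀ δ : ℝ, 0 ≤ δ → δ ≤ Δ →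
      γ - ε ≤ setsDist (cthickening (d i + δ) Fi ∩ Kd)
          (frontier (cthickening (d j) (A j))) ∧ 0 < γ - ε := by
  intro ε hε hεγ
  have hγε : 0 < γ - ε := sub_pos.2 hεγ
  set Fr := frontier (cthickening (d j) (A j)) with hFrdef
  have hdi : 0 ≤ d i := by
    obtain ⟨K, _, hdK⟩ := hd
    rw [hdK i]; exact Metric.hausdorffDist_nonneg
  have hFiNe : Fi.Nonempty := by
    by_contra h
    rw [not_nonempty_iff_eq_empty] at h
    rw [hHPFi, h, cthickening_empty, empty_inter] at hne
    exact hne.ne_empty rfl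
  have hFrNe : Fr.Nonempty := by
    by_contra h
    rw [not_nonempty_iff_eq_empty] at h
    rw [h, setsDist, prod_empty, image_empty, Real.sInf_empty] at hγ
    exact hγpos.ne' hγ.symm
  have hKdclosed : IsClosed Kd := by
    rw [hKd]; exact isClosed_iInter fun k => isClosed_cthickening
  have hKdcomp : IsCompact Kd := by
    have hsub' : Kd ⊆ cthickening (d i) (A i) := by
      rw [hKd]; exact iInter_subset _ i
    exact Metric.isCompact_of_isClosed_isBounded hKdclosed
      ((((hA i).2.1.isBounded).cthickening).subset hsub')
  have bdd : ∀ M N : Set X, BddBelow ((fun p : X × X => dist p.1 p.2) '' (M ×ˢ N)) := by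
    intro M N
    refine ⟨0, ?_⟩
    rintro r ⟨p, _, rfl⟩
    exact dist_nonneg
  have key : ∃ Δ : ℝ, 0 < Δ ∧ ∀ δ : ℝ, 0 ≤ δ → δ ≤ Δ →
      γ - ε ≤ setsDist (cthickening (d i + δ) Fi ∩ Kd) Fr := by
    by_contra hcon
    push_neg at hcon
    have hseq : ∀ k : ℕ, ∃ δ : ℝ, 0 ≤ δ ∧ δ ≤ 1/(k+1) ∧
        setsDist (cthickening (d i + δ) Fi ∩ Kd) Fr < γ - ε := by
      intro k
      obtain ⟨δ, h0, h1, h2⟩ := hcon (1/(k+1)) (by positivity)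
      exact ⟨δ, h0, h1, h2⟩
    choose δs hδ0 hδ1 hδ2 using hseq
    have hpair : ∀ k : ℕ, ∃ x z : X, x ∈ cthickening (d i + δs k) Fi ∩ Kd ∧ z ∈ Fr ∧
        dist x z < γ - ε := by
      intro k
      have hHne : (cthickening (d i + δs k) Fi ∩ Kd).Nonempty := by
        apply hne.mono
        rw [hHPFi]
        exact inter_subset_inter_left _
          (cthickening_mono (le_add_of_nonneg_right (hδ0 k)) _)
      obtain ⟨x, hx⟩ := hHne
      obtain ⟨z, hz⟩ := hFrNe
      have hne' : ((fun p : X × X => dist p.1 p.2) ''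
          ((cthickening (d i + δs k) Fi ∩ Kd) ×ˢ Fr)).Nonempty :=
        ⟨dist x z, ⟨(x, z), mk_mem_prod hx hz, rfl⟩⟩
      obtain ⟨r, ⟨p, hp, rfl⟩, hr⟩ := exists_lt_of_csInf_lt hne' (hδ2 k)
      exact ⟨p.1, p.2, hp.1, hp.2, hr⟩
    choose xs zs hxmem hzmem hdlt using hpair
    obtain ⟨x, hxKd, φ, hφ, hlim⟩ := hKdcomp.tendsto_subseq (fun k => (hxmem k).2)
    have hxinf : ∀ k : ℕ, Metric.infDist (xs k) Fi ≤ d i + δs k := by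
      intro k
      exact (mem_cthick_iff hFiNe (by linarith [hδ0 k])).1 (hxmem k).1
    have hδlim : Filter.Tendsto (fun k : ℕ => d i + δs (φ k)) Filter.atTop (nhds (d i)) := by
      have h0 : Filter.Tendsto (fun k : ℕ => δs (φ k)) Filter.atTop (nhds 0) := by
        refine squeeze_zero (fun k => hδ0 (φ k)) (fun k => ?_)
          tendsto_one_div_add_atTop_nhds_zero_nat
        calc δs (φ k) ≤ 1/(↑(φ k) + 1) := hδ1 (φ k)
          _ ≤ 1/(↑k + 1) := by
            apply one_div_le_one_div_of_le (by positivity)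
            have hk : k ≤ φ k := hφ.le_apply
            have : (k : ℝ) ≤ φ k := Nat.cast_le.2 hk
            linarith
      simpa using tendsto_const_nhds.add h0
    have hinf_x : Metric.infDist x Fi ≤ d i := by
      have hcont : Filter.Tendsto (fun k : ℕ => Metric.infDist (xs (φ k)) Fi)
          Filter.atTop (nhds (Metric.infDist x Fi)) :=
        ((Metric.continuous_infDist_pt Fi).continuousAt.tendsto.comp hlim)
      exact le_of_tendsto_of_tendsto' hcont hδlim (fun k => hxinf (φ k))
    have hxHP : x ∈ HPFi := by
      rw [hHPFi]
      exact ⟨(mem_cthick_iff hFiNe hdi).2 hinf_x, hxKd⟩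
    have hγle : ∀ k : ℕ, γ ≤ dist x (zs (φ k)) := by
      intro k
      rw [← hγ]
      exact csInf_le (bdd _ _) ⟨(x, zs (φ k)), mk_mem_prod hxHP (hzmem (φ k)), rfl⟩
    have hεlt : ∀ k : ℕ, ε < dist x (xs (φ k)) := by
      intro k
      have ht := dist_triangle x (xs (φ k)) (zs (φ k))
      have h2 := hdlt (φ k)
      have h3 := hγle k
      linarith
    have hlim0 : Filter.Tendsto (fun k : ℕ => dist x (xs (φ k))) Filter.atTop (nhds 0) := by
      have := (tendsto_iff_dist_tendsto_zero).1 hlim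
      simpa [dist_comm] using this
    obtain ⟨k, hk⟩ := (hlim0.eventually (gt_mem_nhds hε)).exists
    exact absurd (hεlt k) (not_lt.2 hk.le)
  obtain ⟨Δ, hΔ, hkey⟩ := key
  exact ⟨Δ, hΔ, fun δ h0 h1 => ⟨hkey δ h0 h1, hγε⟩⟩
end
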